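/- (Nanjundiah's inequality) For every positive integer n, R_2(n) < r_n < R_1(n), i.e., 1/(12n) − 1/(360 n^3) < r_n < 1/(12n), where r_n = ln( n!·e^n / (√(2πn)·n^n) ). -/

import Mathlib

open Real Nat

/-- `r_n = ln ( n! eⁿ / (√(2πn) nⁿ) )`, the logarithmic error in Stirling's formula. -/
noncomputable def stirlingError (n : ℕ) : ℝ :=
  Real.log ((n ! : ℝ) * Real.exp n / (Real.sqrt (2 * π * n) * (n : ℝ) ^ n))

open Filter Topology

lemma stirlingError_eq (n : ℕ) (hn : 1 ≤ n) :
    stirlingError n = Real.log (Stirling.stirlingSeq n) - Real.log (Real.sqrt π) := by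
  have hn0 : (0:ℝ) < n := by exact_mod_cast hn
  have harg : (n ! : ℝ) * Real.exp n / (Real.sqrt (2 * π * n) * (n : ℝ) ^ n)
      = Stirling.stirlingSeq n / Real.sqrt π := by
    rw [Stirling.stirlingSeq]
    rw [show (2 * π * (n:ℝ)) = π * (2 * n) by ring, Real.sqrt_mul pi_pos.le]
    rw [div_pow, Real.exp_one_pow]
    have h1 : Real.sqrt (2*(n:ℝ)) ≠ 0 := by positivity
    have h2 : (n:ℝ)^n ≠ 0 := by positivity
    have h3 : Real.exp (n:ℝ) ≠ 0 := (Real.exp_pos _).ne'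
    have h4 : Real.sqrt π ≠ 0 := by positivity
    field_simp
  rw [stirlingError, harg, Real.log_div, sub_right_inj]
  · have := Stirling.stirlingSeq'_pos (n-1)
    rw [Nat.sub_add_cancel hn] at this
    exact this.ne'
  · positivity

lemma stirlingError_tendsto_zero : Tendsto stirlingError atTop (𝓝 0) := by
  have hπ : (0:ℝ) < Real.sqrt π := Real.sqrt_pos.mpr pi_pos
  have h1 : Tendsto (fun n => Real.log (Stirling.stirlingSeq n) - Real.log (Real.sqrt π))
      atTop (𝓝 0) := by
    have := ((Real.continuousAt_log hπ.ne').tendsto.comp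
      Stirling.tendsto_stirlingSeq_sqrt_pi).sub_const (Real.log (Real.sqrt π))
    simpa using this
  refine h1.congr' ?_
  filter_upwards [eventually_ge_atTop 1] with n hn
  exact (stirlingError_eq n hn).symm

lemma t_lb (m : ℕ) :
    (1/(2*((m:ℝ)+1)+1))^2/3 + ((1/(2*((m:ℝ)+1)+1))^2)^2/5 ≤
      Real.log (Stirling.stirlingSeq (m+1)) - Real.log (Stirling.stirlingSeq (m+2)) := by
  have h := Stirling.log_stirlingSeq_diff_hasSum m
  have h2 := sum_le_hasSum (Finset.range 2) (fun k _ => by positivity) h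
  refine le_trans (le_of_eq ?_) h2
  rw [Finset.sum_range_succ, Finset.sum_range_one]
  push_cast
  ring

lemma t_ub (m : ℕ) :
    Real.log (Stirling.stirlingSeq (m+1)) - Real.log (Stirling.stirlingSeq (m+2)) ≤
      (1/(2*((m:ℝ)+1)+1))^2/3 +
        ((1/(2*((m:ℝ)+1)+1))^2)^2/(5*(1-(1/(2*((m:ℝ)+1)+1))^2)) := by
  have hx0 : (0:ℝ) ≤ (1/(2*((m:ℝ)+1)+1))^2 := by positivity
  have hx1 : (1/(2*((m:ℝ)+1)+1))^2 < 1 := by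
    rw [div_pow, one_pow, div_lt_one (by positivity)]
    nlinarith [Nat.cast_nonneg (α := ℝ) m]
  set x : ℝ := (1/(2*((m:ℝ)+1)+1))^2 with hx
  have h := Stirling.log_stirlingSeq_diff_hasSum m
  set S := Real.log (Stirling.stirlingSeq (m+1)) - Real.log (Stirling.stirlingSeq (m+2)) with hS
  have h' : HasSum (fun k : ℕ => (1 : ℝ) / (2 * ((k:ℝ) + 1) + 1) * x ^ (k + 1)) S := by
    refine h.congr_fun fun k => ?_
    rw [hx]; push_cast; try ring
  have htail : HasSum (fun k : ℕ =>
      (1 : ℝ) / (2 * ((k:ℝ) + 1 + 1) + 1) * x ^ (k + 1 + 1))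
      (S - ∑ i ∈ Finset.range 1, (1 : ℝ) / (2 * ((i:ℝ) + 1) + 1) * x ^ (i + 1)) := by
    exact (hasSum_nat_add_iff' (f := fun k : ℕ =>
      (1 : ℝ) / (2 * ((k:ℝ) + 1) + 1) * x ^ (k + 1)) 1).mpr h' |>.congr_fun fun k => by push_cast [hx]; try ring

  norm_num [Finset.sum_range_one] at htail
  have hgeo : HasSum (fun k : ℕ => x^2/5 * x ^ k) (x^2/5 * (1 - x)⁻¹) :=
    (hasSum_geometric_of_lt_one hx0 hx1).mul_left _
  have hle : S - x/3 ≤ x^2/5 * (1 - x)⁻¹ := by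
    refine le_of_eq_of_le ?_ (hasSum_le (fun k => ?_) htail hgeo)
    · ring_nf
    have h5 : (1:ℝ)/(2*((k:ℝ)+1+1)+1) ≤ 1/5 := by
      apply one_div_le_one_div_of_le (by norm_num)
      have : (0:ℝ) ≤ (k:ℝ) := Nat.cast_nonneg k
      linarith
    have h5' : ((2 * ((k:ℝ) + 1 + 1) + 1))⁻¹ ≤ 1/5 := by rw [← one_div]; exact h5
    calc ((2 * ((k:ℝ) + 1 + 1) + 1))⁻¹ * x ^ (k + 1 + 1)
        ≤ 1/5 * x ^ (k+2) := mul_le_mul_of_nonneg_right h5' (by positivity)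
      _ = x^2/5 * x^k := by ring
  have heq : x^2/5 * (1-x)⁻¹ = x^2/(5*(1-x)) := by
    rw [div_mul_eq_div_div_swap]; ring_nf
  linarith [heq ▸ hle]

lemma poly_ub (y : ℝ) (hy : 1 ≤ y) :
    (1/(2*y+1))^2/3 + ((1/(2*y+1))^2)^2/(5*(1-(1/(2*y+1))^2)) <
      1/(12*y) - 1/(12*(y+1)) := by
  have hy0 : (0:ℝ) < y := by linarith
  have hc : (0:ℝ) < 2*y+1 := by linarith
  set x : ℝ := (1/(2*y+1))^2 with hxdef
  have hx0 : 0 < x := by positivity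
  have hx1 : 0 < 1 - x := by
    rw [hxdef, div_pow, one_pow, sub_pos, div_lt_one (by positivity)]
    nlinarith
  have step1 : x/3 + x^2/(5*(1-x)) < x/3 + x^2/(3*(1-x)) := by
    have : x^2/(5*(1-x)) < x^2/(3*(1-x)) := by
      apply div_lt_div_of_pos_left (by positivity) (by positivity)
      nlinarith
    linarith
  have step2 : x/3 + x^2/(3*(1-x)) = x/(3*(1-x)) := by
    field_simp
    ring
  have step3 : x/(3*(1-x)) = 1/(12*y) - 1/(12*(y+1)) := by
    have h1x : 1 - x = (4*y*(y+1))/(2*y+1)^2 := by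
      rw [hxdef, div_pow, one_pow]
      field_simp
      ring
    rw [h1x, hxdef]
    field_simp
    ring
  calc x/3 + x^2/(5*(1-x)) < x/3 + x^2/(3*(1-x)) := step1
    _ = 1/(12*y) - 1/(12*(y+1)) := by rw [step2, step3]

lemma poly_lb (y : ℝ) (hy : 1 ≤ y) :
    (1/(12*y) - 1/(360*y^3)) - (1/(12*(y+1)) - 1/(360*(y+1)^3)) <
      (1/(2*y+1))^2/3 + ((1/(2*y+1))^2)^2/5 := by
  have hy0 : (0:ℝ) < y := by linarith
  have hc : (0:ℝ) < 2*y+1 := by linarith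
  have hrhs : (1/(2*y+1))^2/3 + ((1/(2*y+1))^2)^2/5
      = (5*(2*y+1)^2+3)/(15*(2*y+1)^4) := by
    field_simp
    ring
  have hlhs : (1/(12*y) - 1/(360*y^3)) - (1/(12*(y+1)) - 1/(360*(y+1)^3))
      = (30*y^2*(y+1)^3 - (y+1)^3 - 30*y^3*(y+1)^2 + y^3) / (360*y^3*(y+1)^3) := by
    field_simp
    ring
  rw [hlhs, hrhs, div_lt_div_iff₀ (by positivity) (by positivity)]
  nlinarith [pow_pos hy0 3, pow_pos hy0 4, sq_nonneg y, pow_pos hy0 2]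

noncomputable def Fb (n : ℕ) : ℝ := 1/(12*(n:ℝ))
noncomputable def Gb (n : ℕ) : ℝ := 1/(12*(n:ℝ)) - 1/(360*(n:ℝ)^3)

lemma step_ub (n : ℕ) (hn : 1 ≤ n) :
    stirlingError n - stirlingError (n+1) < Fb n - Fb (n+1) := by
  obtain ⟨m, rfl⟩ : ∃ m, n = m + 1 := ⟨n-1, (Nat.succ_pred_eq_of_pos hn).symm⟩
  rw [stirlingError_eq _ hn, stirlingError_eq _ (by omega)]
  have h1 := t_ub m
  have h2 := poly_ub ((m:ℝ)+1) (by linarith [Nat.cast_nonneg (α := ℝ) m])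
  have hF1 : Fb (m+1) = 1/(12*((m:ℝ)+1)) := by rw [Fb]; push_cast; ring_nf
  have hF2 : Fb (m+1+1) = 1/(12*(((m:ℝ)+1)+1)) := by rw [Fb]; push_cast; ring_nf
  rw [hF1, hF2]
  have : Real.log (Stirling.stirlingSeq (m+1)) - Real.log (Real.sqrt π) -
      (Real.log (Stirling.stirlingSeq (m+1+1)) - Real.log (Real.sqrt π))
      = Real.log (Stirling.stirlingSeq (m+1)) - Real.log (Stirling.stirlingSeq (m+2)) := by
    ring_nf
  rw [this]
  exact lt_of_le_of_lt h1 h2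

lemma step_lb (n : ℕ) (hn : 1 ≤ n) :
    Gb n - Gb (n+1) < stirlingError n - stirlingError (n+1) := by
  obtain ⟨m, rfl⟩ : ∃ m, n = m + 1 := ⟨n-1, (Nat.succ_pred_eq_of_pos hn).symm⟩
  rw [stirlingError_eq _ hn, stirlingError_eq _ (by omega)]
  have h1 := t_lb m
  have h2 := poly_lb ((m:ℝ)+1) (by linarith [Nat.cast_nonneg (α := ℝ) m])
  have hG1 : Gb (m+1) = 1/(12*((m:ℝ)+1)) - 1/(360*((m:ℝ)+1)^3) := by
    rw [Gb]; push_cast; ring_nf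
  have hG2 : Gb (m+1+1) = 1/(12*(((m:ℝ)+1)+1)) - 1/(360*(((m:ℝ)+1)+1)^3) := by
    rw [Gb]; push_cast; ring_nf
  rw [hG1, hG2]
  have heq : Real.log (Stirling.stirlingSeq (m+1)) - Real.log (Real.sqrt π) -
      (Real.log (Stirling.stirlingSeq (m+1+1)) - Real.log (Real.sqrt π))
      = Real.log (Stirling.stirlingSeq (m+1)) - Real.log (Stirling.stirlingSeq (m+2)) := by
    ring_nf
  rw [heq]
  calc 1/(12*((m:ℝ)+1)) - 1/(360*((m:ℝ)+1)^3) -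
        (1/(12*(((m:ℝ)+1)+1)) - 1/(360*(((m:ℝ)+1)+1)^3))
      < (1/(2*((m:ℝ)+1)+1))^2/3 + ((1/(2*((m:ℝ)+1)+1))^2)^2/5 := h2
    _ ≤ _ := h1

lemma tendsto_shift (n : ℕ) : Tendsto (fun k : ℕ => ((n+k:ℕ):ℝ)) atTop atTop := by
  apply tendsto_natCast_atTop_atTop.comp
  simpa [Nat.add_comm] using tendsto_add_atTop_nat n

lemma Fb_tendsto (n : ℕ) : Tendsto (fun k : ℕ => Fb (n+k)) atTop (𝓝 0) := by
  simp only [Fb]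
  exact Tendsto.div_atTop tendsto_const_nhds ((tendsto_shift n).const_mul_atTop (by norm_num))

lemma Gb_tendsto (n : ℕ) : Tendsto (fun k : ℕ => Gb (n+k)) atTop (𝓝 0) := by
  simp only [Gb]
  have h1 : Tendsto (fun k : ℕ => 1/(12*((n+k:ℕ):ℝ))) atTop (𝓝 0) :=
    Tendsto.div_atTop tendsto_const_nhds ((tendsto_shift n).const_mul_atTop (by norm_num))
  have h2 : Tendsto (fun k : ℕ => 1/(360*((n+k:ℕ):ℝ)^3)) atTop (𝓝 0) := by
    refine Tendsto.div_atTop tendsto_const_nhds (Tendsto.const_mul_atTop (by norm_num) ?_)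
    exact (tendsto_pow_atTop (by norm_num : (3:ℕ) ≠ 0)).comp (tendsto_shift n)
  simpa using h1.sub h2

lemma err_shift_tendsto (n : ℕ) :
    Tendsto (fun k : ℕ => stirlingError (n+k)) atTop (𝓝 0) := by
  apply stirlingError_tendsto_zero.comp
  simpa [Nat.add_comm] using tendsto_add_atTop_nat n

lemma ub_global (n : ℕ) (hn : 1 ≤ n) : stirlingError n ≤ Fb n := by
  have key : ∀ k : ℕ, stirlingError n ≤ Fb n - Fb (n+k) + stirlingError (n+k) := by
    intro k
    induction k with
    | zero => simp
    | succ k ih =>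
      have h := step_ub (n+k) (by omega)
      have : stirlingError (n+k) ≤ Fb (n+k) - Fb (n+k+1) + stirlingError (n+k+1) := by
        linarith
      calc stirlingError n ≤ Fb n - Fb (n+k) + stirlingError (n+k) := ih
        _ ≤ Fb n - Fb (n+(k+1)) + stirlingError (n+(k+1)) := by
            rw [show n+(k+1) = n+k+1 by ring]; linarith
  have hlim : Tendsto (fun k : ℕ => Fb n - Fb (n+k) + stirlingError (n+k)) atTop (𝓝 (Fb n)) := by
    have := (tendsto_const_nhds (x := Fb n) (f := atTop (α := ℕ))).sub (Fb_tendsto n)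
      |>.add (err_shift_tendsto n)
    simpa using this
  exact ge_of_tendsto' hlim key

lemma lb_global (n : ℕ) (hn : 1 ≤ n) : Gb n ≤ stirlingError n := by
  have key : ∀ k : ℕ, Gb n - Gb (n+k) + stirlingError (n+k) ≤ stirlingError n := by
    intro k
    induction k with
    | zero => simp
    | succ k ih =>
      have h := step_lb (n+k) (by omega)
      calc Gb n - Gb (n+(k+1)) + stirlingError (n+(k+1))
          = Gb n - Gb (n+k) + (Gb (n+k) - Gb (n+k+1) + stirlingError (n+k+1)) := by
            rw [show n+(k+1) = n+k+1 by ring]; ring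
        _ ≤ Gb n - Gb (n+k) + stirlingError (n+k) := by linarith
        _ ≤ stirlingError n := ih
  have hlim : Tendsto (fun k : ℕ => Gb n - Gb (n+k) + stirlingError (n+k)) atTop (𝓝 (Gb n)) := by
    have := (tendsto_const_nhds (x := Gb n) (f := atTop (α := ℕ))).sub (Gb_tendsto n)
      |>.add (err_shift_tendsto n)
    simpa using this
  exact le_of_tendsto' hlim key

/-- **Nanjundiah's inequality**: `1/(12n) − 1/(360 n³) < r_n < 1/(12n)` for every
positive integer `n`. -/
theorem nanjundiah_inequality (n : ℕ) (hn : 1 ≤ n) :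
    1 / (12 * (n : ℝ)) - 1 / (360 * (n : ℝ) ^ 3) < stirlingError n ∧
      stirlingError n < 1 / (12 * (n : ℝ)) := by
  constructor
  · have h1 := step_lb n hn
    have h2 := lb_global (n+1) (by omega)
    have : Gb n < stirlingError n := by
      have := h1
      have h3 : Gb (n+1) ≤ stirlingError (n+1) := h2
      linarith
    simpa [Gb] using this
  · have h1 := step_ub n hn
    have h2 := ub_global (n+1) (by omega)
    have : stirlingError n < Fb n := by linarith
    simpa [Fb] using this
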